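/- The interpretation I : T0 → T is conservative if and only if the word problem instance fails, i.e. if and only if the monoid presentation ⟨G | u_i = v_i (i < m)⟩ does not prove u = v. -/

import Mathlib

/-- Terms of the theory `T0` with three binary symbols `l`, `r`, `m`,
in context `x_1, ..., x_n`. -/
inductive Tm0 : ℕ → Type
  | var {n} : Fin n → Tm0 n
  | l {n} : Tm0 n → Tm0 n → Tm0 n
  | r {n} : Tm0 n → Tm0 n → Tm0 n
  | m {n} : Tm0 n → Tm0 n → Tm0 n

/-- Equational provability in `T0`, whose single axiom is `l(x1,x2) = r(x2,x1)`
(closed under all substitution instances and congruence). -/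
inductive Prov0 : {n : ℕ} → Tm0 n → Tm0 n → Prop
  | refl {n} (t : Tm0 n) : Prov0 t t
  | symm {n} {s t : Tm0 n} : Prov0 s t → Prov0 t s
  | trans {n} {s t w : Tm0 n} : Prov0 s t → Prov0 t w → Prov0 s w
  | congl {n} {a a' b b' : Tm0 n} : Prov0 a a' → Prov0 b b' → Prov0 (.l a b) (.l a' b')
  | congr_ {n} {a a' b b' : Tm0 n} : Prov0 a a' → Prov0 b b' → Prov0 (.r a b) (.r a' b')
  | congm {n} {a a' b b' : Tm0 n} : Prov0 a a' → Prov0 b b' → Prov0 (.m a b) (.m a' b')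
  | ax {n} (a b : Tm0 n) : Prov0 (.l a b) (.r b a)

/-- The left-to-right list of variable occurrences of a term of `T0`. -/
def varList0 {n} : Tm0 n → List (Fin n)
  | .var i => [i]
  | .l a b => varList0 a ++ varList0 b
  | .r a b => varList0 a ++ varList0 b
  | .m a b => varList0 a ++ varList0 b

/-- A term in context `x_1, ..., x_n` is linear-regular if every variable occurs exactly once. -/
def LinReg0 {n} (t : Tm0 n) : Prop := ∀ i : Fin n, (varList0 t).count i = 1

/-- Substitution of variables along a map of variables (`t(x_{σ(1)},...,x_{σ(n)})`). -/
def rename0 {n} (σ : Fin n → Fin n) : Tm0 n → Tm0 n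
  | .var i => .var (σ i)
  | .l a b => .l (rename0 σ a) (rename0 σ b)
  | .r a b => .r (rename0 σ a) (rename0 σ b)
  | .m a b => .m (rename0 σ a) (rename0 σ b)

/-- Terms of the theory `T`: unary symbols `g x` for each letter `x` of the alphabet `Fin N`,
an extra unary symbol `al` (written α), and a binary symbol `m`, in context `x_1, ..., x_n`. -/
inductive TmT (N : ℕ) : ℕ → Type
  | var {n} : Fin n → TmT N n
  | g {n} : Fin N → TmT N n → TmT N n
  | al {n} : TmT N n → TmT N n
  | m {n} : TmT N n → TmT N n → TmT N n

/-- A word `w` over the alphabet applied to a term as a composite of unary symbols. -/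
def wApp {N n : ℕ} (w : List (Fin N)) (t : TmT N n) : TmT N n :=
  w.foldr (fun x s => TmT.g x s) t

/-- Equational provability in the theory `T` with axioms `u_i(x1) = v_i(x1)` (for `i : Fin M`,
where `u_i = ur i`, `v_i = vr i`) and `m(uα(x1), x2) = m(vα(x2), x1)`, closed under
all substitution instances and congruence. -/
inductive ProvT {N : ℕ} (M : ℕ) (ur vr : Fin M → List (Fin N)) (u v : List (Fin N)) :
    {n : ℕ} → TmT N n → TmT N n → Prop
  | refl {n} (t : TmT N n) : ProvT M ur vr u v t t
  | symm {n} {s t : TmT N n} : ProvT M ur vr u v s t → ProvT M ur vr u v t s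
  | trans {n} {s t w : TmT N n} :
      ProvT M ur vr u v s t → ProvT M ur vr u v t w → ProvT M ur vr u v s w
  | congg {n} (x : Fin N) {s t : TmT N n} :
      ProvT M ur vr u v s t → ProvT M ur vr u v (.g x s) (.g x t)
  | congal {n} {s t : TmT N n} : ProvT M ur vr u v s t → ProvT M ur vr u v (.al s) (.al t)
  | congm {n} {a a' b b' : TmT N n} : ProvT M ur vr u v a a' → ProvT M ur vr u v b b' →
      ProvT M ur vr u v (.m a b) (.m a' b')
  | axu {n} (i : Fin M) (t : TmT N n) : ProvT M ur vr u v (wApp (ur i) t) (wApp (vr i) t)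
  | axm {n} (t₁ t₂ : TmT N n) :
      ProvT M ur vr u v (.m (wApp u (.al t₁)) t₂) (.m (wApp v (.al t₂)) t₁)

/-- Provability of word equations from the monoid presentation
`⟨ Fin N | ur i = vr i (i : Fin M) ⟩`: the congruence on the free monoid of words
over `Fin N` generated by the relations. -/
inductive MonProv {N M : ℕ} (ur vr : Fin M → List (Fin N)) :
    List (Fin N) → List (Fin N) → Prop
  | of (i : Fin M) : MonProv ur vr (ur i) (vr i)
  | refl (w : List (Fin N)) : MonProv ur vr w w
  | symm {a b} : MonProv ur vr a b → MonProv ur vr b a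
  | trans {a b c} : MonProv ur vr a b → MonProv ur vr b c → MonProv ur vr a c
  | mul {a b c d} : MonProv ur vr a b → MonProv ur vr c d → MonProv ur vr (a ++ c) (b ++ d)

/-- The extension `Ī` to all terms of the interpretation `I : T0 → T` given by
`l ↦ m(uα(x1),x2)`, `r ↦ m(vα(x1),x2)`, `m ↦ m(x1,x2)`. -/
def ITerm {N : ℕ} (u v : List (Fin N)) : {n : ℕ} → Tm0 n → TmT N n
  | _, .var i => .var i
  | _, .l a b => .m (wApp u (.al (ITerm u v a))) (ITerm u v b)
  | _, .r a b => .m (wApp v (.al (ITerm u v a))) (ITerm u v b)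
  | _, .m a b => .m (ITerm u v a) (ITerm u v b)


/-! If the presentation proves `u = v`, then `Ī` identifies `l(x₁,x₂)` with `r(x₁,x₂)`, which
`T0` separates since `r` swaps its arguments in every model where `l` concatenates. Conversely,
given a monoid `A` representing the presentation with `u ≠ v` in `A` (the presented monoid
itself will do), `T` has a normal-form model: an element is a pair of a monoid element (the
accumulated unary letters) and a head, and `m` applied to `(u, α x)` or `(v, α x)` is recorded
as `l(x, y)` resp. `l(y, x)`; since `u ≠ v` in `A` these cases do not overlap, so the axiom
`m(uα(x₁),x₂) = m(vα(x₂),x₁)` holds. The image of a `T0`-term evaluates to its syntax with every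
`r(a,b)` rewritten to `l(b,a)`, from which the term is recovered up to `T0`-provability. -/

def Tm0.varListSwapR {n : ℕ} : Tm0 n → List (Fin n)
  | .var i => [i]
  | .l a b => a.varListSwapR ++ b.varListSwapR
  | .r a b => b.varListSwapR ++ a.varListSwapR
  | .m a b => a.varListSwapR ++ b.varListSwapR

theorem Prov0.varListSwapR_eq {n : ℕ} {s t : Tm0 n} (h : Prov0 s t) :
    s.varListSwapR = t.varListSwapR := by
  induction h <;> simp_all [Tm0.varListSwapR]

theorem not_prov0_l_r : ¬ Prov0 (.l (.var 0) (.var 1)) (.r (.var (0 : Fin 2)) (.var 1)) :=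
  fun h => by simpa [Tm0.varListSwapR] using h.varListSwapR_eq

section ProvT

variable {N M : ℕ} {ur vr : Fin M → List (Fin N)} {u v : List (Fin N)}

theorem ProvT.wApp_congr {n : ℕ} (w : List (Fin N)) {s t : TmT N n}
    (h : ProvT M ur vr u v s t) : ProvT M ur vr u v (wApp w s) (wApp w t) := by
  induction w with
  | nil => exact h
  | cons x w ih => exact .congg x ih

theorem wApp_append {n : ℕ} (a b : List (Fin N)) (t : TmT N n) :
    wApp (a ++ b) t = wApp a (wApp b t) :=
  List.foldr_append

theorem MonProv.provT_wApp {a b : List (Fin N)} (h : MonProv ur vr a b) {n : ℕ}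
    (t : TmT N n) : ProvT M ur vr u v (wApp a t) (wApp b t) := by
  induction h generalizing t with
  | of i => exact .axu i t
  | refl w => exact .refl _
  | symm _ ih => exact (ih t).symm
  | trans _ _ ih₁ ih₂ => exact (ih₁ t).trans (ih₂ t)
  | @mul a b c d _ _ ih₁ ih₂ =>
    rw [wApp_append, wApp_append]
    exact (ih₁ (wApp c t)).trans ((ih₂ t).wApp_congr b)

end ProvT

inductive NFHead (A : Type*) (n : ℕ) : Type _
  | var : Fin n → NFHead A n
  | al : A → NFHead A n → NFHead A n
  | l : A → NFHead A n → A → NFHead A n → NFHead A n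
  | m : A → NFHead A n → A → NFHead A n → NFHead A n

namespace NFHead

variable {N : ℕ} {A : Type*} {n : ℕ}

def toTm0 : NFHead A n → Tm0 n
  | .var i => .var i
  | .al _ p => p.toTm0
  | .l _ p _ q => .l p.toTm0 q.toTm0
  | .m _ p _ q => .m p.toTm0 q.toTm0

variable [Monoid A]

def ofTm0 : Tm0 n → NFHead A n
  | .var i => .var i
  | .l a b => .l 1 (ofTm0 a) 1 (ofTm0 b)
  | .r a b => .l 1 (ofTm0 b) 1 (ofTm0 a)
  | .m a b => .m 1 (ofTm0 a) 1 (ofTm0 b)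

theorem prov0_toTm0_ofTm0 (s : Tm0 n) : Prov0 (ofTm0 (A := A) s).toTm0 s := by
  induction s with
  | var i => exact .refl _
  | l a b iha ihb => exact .congl iha ihb
  | r a b iha ihb => exact (Prov0.congl ihb iha).trans (.ax b a)
  | m a b iha ihb => exact .congm iha ihb

theorem prov0_of_ofTm0_eq {s s' : Tm0 n} (h : ofTm0 (A := A) s = ofTm0 s') : Prov0 s s' :=
  (h ▸ prov0_toTm0_ofTm0 s).symm.trans (prov0_toTm0_ofTm0 s')

variable [DecidableEq A] (f : FreeMonoid (Fin N) →* A) (u v : List (Fin N))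

def mulNF : A × NFHead A n → A × NFHead A n → A × NFHead A n
  | (w, .al a p), (b, q) =>
    if w = f (.ofList u) then (1, .l a p b q)
    else if w = f (.ofList v) then (1, .l b q a p)
    else (1, .m w (.al a p) b q)
  | (w, p), (b, q) => (1, .m w p b q)

def eval : TmT N n → A × NFHead A n
  | .var i => (1, .var i)
  | .g x t => (f (.of x) * (eval t).1, (eval t).2)
  | .al t => (1, .al (eval t).1 (eval t).2)
  | .m s t => mulNF f u v (eval s) (eval t)

theorem eval_wApp (w : List (Fin N)) (t : TmT N n) :
    eval f u v (wApp w t) = (f (.ofList w) * (eval f u v t).1, (eval f u v t).2) := by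
  induction w with
  | nil => simp [wApp]
  | cons x w ih =>
    change eval f u v (.g x (wApp w t)) = _
    simp [eval, ih, mul_assoc]

variable {M : ℕ} {ur vr : Fin M → List (Fin N)}

theorem eval_eq_of_provT (hrel : ∀ i, f (.ofList (ur i)) = f (.ofList (vr i)))
    (hsep : f (.ofList u) ≠ f (.ofList v)) {s t : TmT N n} (h : ProvT M ur vr u v s t) :
    eval f u v s = eval f u v t := by
  induction h with
  | refl => rfl
  | symm _ ih => exact ih.symm
  | trans _ _ ih₁ ih₂ => exact ih₁.trans ih₂
  | congg _ _ ih | congal _ ih => simp only [eval, ih]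
  | congm _ _ ih₁ ih₂ => simp only [eval, ih₁, ih₂]
  | axu i t => simp only [eval_wApp, hrel]
  | axm t₁ t₂ => simp [eval, eval_wApp, mulNF, hsep.symm]

theorem eval_ITerm (hsep : f (.ofList u) ≠ f (.ofList v)) (s : Tm0 n) :
    eval f u v (ITerm u v s) = (1, ofTm0 s) := by
  induction s with
  | var i => simp [ITerm, ofTm0, eval]
  | l a b iha ihb => simp [ITerm, ofTm0, eval, eval_wApp, mulNF, iha, ihb]
  | r a b iha ihb => simp [ITerm, ofTm0, eval, eval_wApp, mulNF, iha, ihb, hsep.symm]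
  | m a b iha ihb =>
    simp only [ITerm, eval, iha, ihb]
    -- `ofTm0 a` is never an `al` head, so `mulNF` takes its last branch
    cases a <;> rfl

theorem prov0_of_provT_ITerm (hrel : ∀ i, f (.ofList (ur i)) = f (.ofList (vr i)))
    (hsep : f (.ofList u) ≠ f (.ofList v)) {s s' : Tm0 n}
    (h : ProvT M ur vr u v (ITerm u v s) (ITerm u v s')) : Prov0 s s' := by
  have heval := eval_eq_of_provT f u v hrel hsep h
  rw [eval_ITerm f u v hsep, eval_ITerm f u v hsep] at heval
  exact prov0_of_ofTm0_eq (Prod.ext_iff.1 heval).2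

end NFHead

section Presentation

variable {N M : ℕ} (ur vr : Fin M → List (Fin N))

def presentationRels (a b : FreeMonoid (Fin N)) : Prop :=
  ∃ i, a = .ofList (ur i) ∧ b = .ofList (vr i)

theorem monProv_of_conGen {a b : FreeMonoid (Fin N)} (h : conGen (presentationRels ur vr) a b) :
    MonProv ur vr a.toList b.toList := by
  induction h with
  | of _ _ h => obtain ⟨i, rfl, rfl⟩ := h; exact .of i
  | refl => exact .refl _
  | symm _ ih => exact ih.symm
  | trans _ _ ih₁ ih₂ => exact ih₁.trans ih₂
  | mul _ _ ih₁ ih₂ => exact ih₁.mul ih₂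

end Presentation

/-- The interpretation `I : T0 → T` is conservative if and only if the
word problem instance fails, i.e. iff the monoid presentation does not prove `u = v`. -/
theorem I_conservative_iff {N M : ℕ} (ur vr : Fin M → List (Fin N)) (u v : List (Fin N)) :
    (∀ (n : ℕ) (s s' : Tm0 n),
        ProvT M ur vr u v (ITerm u v s) (ITerm u v s') → Prov0 s s') ↔
      ¬ MonProv ur vr u v := by
  constructor
  · intro hcons huv
    refine not_prov0_l_r (hcons 2 _ _ ?_)
    simp only [ITerm]
    exact .congm (huv.provT_wApp _) (.refl _)
  · intro huv n s s'
    classical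
    let f := PresentedMonoid.mk (presentationRels ur vr)
    have hrel : ∀ i, f (.ofList (ur i)) = f (.ofList (vr i)) := fun i =>
      PresentedMonoid.mk_eq_mk_of_rel ⟨i, rfl, rfl⟩
    have hsep : f (.ofList u) ≠ f (.ofList v) := fun h =>
      huv (monProv_of_conGen ur vr (PresentedMonoid.mk_eq_mk_iff.1 h))
    exact NFHead.prov0_of_provT_ITerm f u v hrel hsep
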